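/- arXiv:math/0612029 — 3 statements merged into one kernel-verified Lean document; each statement's English description precedes it below -/
import Mathlib

section
/- Let m ≥ 1 and let ℓ : ZMod m → Fin k label the boundary components of a disk with m boundary punctures, where the puncture at position i separates components i and i+1, and call puncture i mixed if ℓ(i) ≠ ℓ(i+1). Suppose ℓ satisfies the weak admissibility condition: for all i, j with ℓ(i) = ℓ(j), at least one of the two cyclic intervals of punctures determined by a collapsing arc from component i to component j (namely {i, ..., j-1} or {j, ..., i-1}) contains no mixed puncture. Then for every label c ∈ Fin k, the set {i : ℓ(i) = c} is a cyclic interval in ZMod m (i.e., it is either empty, all of ZMod m, or of the form {a, a+1, ..., b} for some a, b). -/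
/-- `t` lies in the cyclic interval `[i, j)` in `ZMod m`. -/
def cyclicBetween {m : ℕ} [NeZero m] (i j t : ZMod m) : Prop :=
  (t - i).val < (j - i).val

/-!
Fix a label `c` that occurs but does not occur everywhere, and a component `x` not labeled `c`.
Order the components labeled `c` by their distance `(t - x).val` from `x`, and let `a` and `b` be the
first and the last. The arc from `b` back round to `a` passes through `x`, so it cannot be free of
mixed punctures; by admissibility the arc from `a` to `b` is, hence all of `[a, b]` is labeled `c`,
and by the choice of `a` and `b` nothing else is.
-/

namespace ZMod

variable {m : ℕ} [NeZero m]

theorem val_sub_eq_of_val_sub_le {x s t : ZMod m} (h : (s - x).val ≤ (t - x).val) :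
    (t - s).val = (t - x).val - (s - x).val := by
  rw [← ZMod.val_sub h, sub_sub_sub_cancel_right]

/-- If `a` comes strictly before `b` when starting from `x`, then `x` lies in the cyclic
interval `[b, a]`. -/
theorem val_sub_le_of_val_sub_lt {x a b : ZMod m} (h : (a - x).val < (b - x).val) :
    (x - b).val ≤ (a - b).val := by
  have hbx : b - x ≠ 0 := by
    rw [← ZMod.val_ne_zero]; omega
  have hba : b - a ≠ 0 := by
    rw [← ZMod.val_ne_zero, val_sub_eq_of_val_sub_le h.le]; omega
  have := NeZero.mk hbx
  have := NeZero.mk hba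
  rw [← neg_sub b x, ← neg_sub b a, ZMod.val_neg_of_ne_zero, ZMod.val_neg_of_ne_zero,
    val_sub_eq_of_val_sub_le h.le]
  omega

end ZMod

theorem eq_of_forall_cyclicBetween_eq_succ {m : ℕ} [NeZero m] {α : Type*} {ℓ : ZMod m → α}
    {a b : ZMod m} (h : ∀ t, cyclicBetween a b t → ℓ t = ℓ (t + 1)) {t : ZMod m}
    (ht : (t - a).val ≤ (b - a).val) : ℓ t = ℓ a := by
  have step : ∀ d : ℕ, d ≤ (b - a).val → ℓ (a + d) = ℓ a := by
    intro d
    induction d with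
    | zero => simp
    | succ n ih =>
      intro hn
      have hnm : n < m := by have := ZMod.val_lt (b - a); omega
      have hmid : cyclicBetween a b (a + n) := by
        rw [cyclicBetween, add_sub_cancel_left, ZMod.val_cast_of_lt hnm]; omega
      rw [Nat.cast_succ, ← add_assoc, ← h _ hmid, ih (by omega)]
  simpa using step _ ht

/-- If the labeling `ℓ` of the boundary components of a disk with `m` boundary
punctures satisfies weak admissibility (for every pair of equal-labeled components,
one of the two cyclic intervals of punctures between them contains no mixed
puncture), then for every label `c` the set of components labeled `c` is a cyclic
interval: empty, everything, or of the form `{a, a+1, ..., b}`. -/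
theorem stmt1 {m k : ℕ} [NeZero m] (ℓ : ZMod m → Fin k)
    (hadm : ∀ i j : ZMod m, ℓ i = ℓ j →
      (∀ t, cyclicBetween i j t → ℓ t = ℓ (t + 1)) ∨
      (∀ t, cyclicBetween j i t → ℓ t = ℓ (t + 1))) :
    ∀ c : Fin k,
      {i : ZMod m | ℓ i = c} = ∅ ∨
      {i : ZMod m | ℓ i = c} = Set.univ ∨
      ∃ a b : ZMod m, {i : ZMod m | ℓ i = c} = {t : ZMod m | (t - a).val ≤ (b - a).val} := by
  intro c
  by_cases hS : ∃ i, ℓ i = c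
  swap
  · exact Or.inl (Set.eq_empty_of_forall_notMem fun i hi => hS ⟨i, hi⟩)
  by_cases hall : ∀ i, ℓ i = c
  · exact Or.inr (Or.inl (Set.eq_univ_of_forall hall))
  obtain ⟨x, hx⟩ := not_forall.mp hall
  right; right
  obtain ⟨i, hi⟩ := hS
  have hne : (Finset.univ.filter (ℓ · = c)).Nonempty := ⟨i, by simpa using hi⟩
  obtain ⟨a, ha, hamin⟩ := Finset.exists_min_image _ (fun t => (t - x).val) hne
  obtain ⟨b, hb, hbmax⟩ := Finset.exists_max_image _ (fun t => (t - x).val) hne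
  simp only [Finset.mem_filter, Finset.mem_univ, true_and] at ha hb hamin hbmax
  have hab := hbmax a ha
  have hclean : ∀ t, cyclicBetween a b t → ℓ t = ℓ (t + 1) := by
    rcases hadm a b (ha.trans hb.symm) with h | h
    · exact h
    rcases hab.eq_or_lt with heq | hlt
    · -- `(b - a).val = 0`, so `[a, b)` is empty
      intro t ht
      rw [cyclicBetween, ZMod.val_sub_eq_of_val_sub_le hab, heq] at ht
      omega
    · exact absurd ((eq_of_forall_cyclicBetween_eq_succ h
        (ZMod.val_sub_le_of_val_sub_lt hlt)).trans hb) hx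
  refine ⟨a, b, Set.ext fun t => ⟨fun ht => ?_, fun ht =>
    (eq_of_forall_cyclicBetween_eq_succ hclean ht).trans ha⟩⟩
  have := hbmax t ht
  simp only [Set.mem_ofPred_eq, ZMod.val_sub_eq_of_val_sub_le (hamin t ht),
    ZMod.val_sub_eq_of_val_sub_le hab]
  omega
end

section
/- Let m ≥ 1 and ℓ : ZMod m → Fin k be as above, satisfying weak admissibility: for all i, j with ℓ(i) = ℓ(j), one of the two cyclic intervals of punctures {i, ..., j-1} and {j, ..., i-1} contains no mixed puncture (where puncture i is mixed iff ℓ(i) ≠ ℓ(i+1)). Then the total number of mixed punctures is at most k. -/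
variable {m : ℕ} [NeZero m]

lemma ZMod.val_sub_one_lt {a : ZMod m} (ha : a ≠ 0) : (a - 1).val < a.val := by
  have hpos : 0 < a.val := ZMod.val_pos.2 ha
  have hone : (1 : ZMod m).val = 1 :=
    ZMod.val_one'' fun hm => ha (by subst hm; exact Subsingleton.elim _ _)
  rw [ZMod.val_sub (hone ▸ hpos), hone]
  omega

lemma cyclicBetween_add_one_add_one {i j : ZMod m} (hij : i ≠ j) :
    cyclicBetween (i + 1) (j + 1) j := by
  unfold cyclicBetween
  rw [show j - (i + 1) = j - i - 1 by ring, show j + 1 - (i + 1) = j - i by ring]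
  exact ZMod.val_sub_one_lt (sub_ne_zero.2 hij.symm)

def IsWeaklyAdmissible {α : Type*} (ℓ : ZMod m → α) : Prop :=
  ∀ i j : ZMod m, ℓ i = ℓ j →
    (∀ t, cyclicBetween i j t → ℓ t = ℓ (t + 1)) ∨
    (∀ t, cyclicBetween j i t → ℓ t = ℓ (t + 1))

namespace IsWeaklyAdmissible

variable {α : Type*} {ℓ : ZMod m → α}

lemma injOn_label_add_one (hℓ : IsWeaklyAdmissible ℓ) :
    Set.InjOn (fun i => ℓ (i + 1)) {i | ℓ i ≠ ℓ (i + 1)} := by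
  intro i hi j hj hlabel
  by_contra hij
  rcases hℓ (i + 1) (j + 1) hlabel with h | h
  · exact hj (h j (cyclicBetween_add_one_add_one hij))
  · exact hi (h i (cyclicBetween_add_one_add_one (Ne.symm hij)))

lemma card_mixed_le [Fintype α] [DecidableEq α] (hℓ : IsWeaklyAdmissible ℓ) :
    (Finset.univ.filter fun i => ℓ i ≠ ℓ (i + 1)).card ≤ Fintype.card α :=
  Finset.card_le_card_of_injOn _ (fun _ _ => Finset.mem_univ _)
    (by simpa only [Finset.coe_filter, Finset.mem_univ, true_and] using hℓ.injOn_label_add_one)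

end IsWeaklyAdmissible

/-- If the labeling `ℓ : ZMod m → Fin k` of the boundary components satisfies weak
admissibility, then the total number of mixed punctures (positions `i` with
`ℓ i ≠ ℓ (i+1)`) is at most `k`. -/
theorem stmt2 {m k : ℕ} [NeZero m] (ℓ : ZMod m → Fin k)
    (hadm : ∀ i j : ZMod m, ℓ i = ℓ j →
      (∀ t, cyclicBetween i j t → ℓ t = ℓ (t + 1)) ∨
      (∀ t, cyclicBetween j i t → ℓ t = ℓ (t + 1))) :
    (Finset.univ.filter (fun i : ZMod m => ℓ i ≠ ℓ (i + 1))).card ≤ k := by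
  simpa only [Fintype.card_fin] using IsWeaklyAdmissible.card_mixed_le hadm
end

section
/- Let m ≥ 1, let ℓ : ZMod m → Fin k label boundary components and let s : ZMod m → Bool mark each puncture as positive (true) or negative (false); puncture i is pure if ℓ(i) = ℓ(i+1) and mixed otherwise. Suppose full admissibility holds: for all i, j with ℓ(i) = ℓ(j), one of the two cyclic intervals of punctures {i, ..., j-1}, {j, ..., i-1} contains only punctures that are both pure and negative (or is empty). If some puncture p is pure and positive, then every puncture q ≠ p is pure and negative; in particular p is the unique positive puncture and there are no mixed punctures. -/
namespace ZMod

theorem val_lt_val_neg_one_iff {m : ℕ} [NeZero m] {x : ZMod m} :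
    x.val < (-1 : ZMod m).val ↔ x ≠ -1 := by
  obtain ⟨n, rfl⟩ : ∃ n, m = n + 1 := Nat.exists_eq_succ_of_ne_zero (NeZero.ne m)
  rw [val_neg_one, ← (val_injective _).ne_iff, val_neg_one, lt_iff_le_and_ne,
    and_iff_right (Nat.lt_succ_iff.1 x.val_lt)]

end ZMod

section CyclicBetween

variable {m : ℕ} [NeZero m]

theorem cyclicBetween_left_iff {i j : ZMod m} : cyclicBetween i j i ↔ i ≠ j := by
  rw [cyclicBetween, sub_self, ZMod.val_zero, ZMod.val_pos, sub_ne_zero, ne_comm]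

theorem cyclicBetween_add_one_left_iff {i t : ZMod m} :
    cyclicBetween (i + 1) i t ↔ t ≠ i := by
  rw [cyclicBetween, show i - (i + 1) = -1 by ring, ZMod.val_lt_val_neg_one_iff,
    sub_add_eq_sub_sub, ← zero_sub (1 : ZMod m), ne_eq, sub_left_inj, sub_eq_zero]

end CyclicBetween

/-- Full admissibility: for every pair of equal-labeled boundary components, one of
the two cyclic intervals of punctures between them contains only pure negative
punctures (or is empty).  If some puncture `p` is pure and positive, then every
other puncture is pure and negative. -/
theorem stmt4 {m k : ℕ} [NeZero m] (ℓ : ZMod m → Fin k) (s : ZMod m → Bool)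
    (hadm : ∀ i j : ZMod m, ℓ i = ℓ j →
      (∀ t, cyclicBetween i j t → ℓ t = ℓ (t + 1) ∧ s t = false) ∨
      (∀ t, cyclicBetween j i t → ℓ t = ℓ (t + 1) ∧ s t = false))
    (p : ZMod m) (hpure : ℓ p = ℓ (p + 1)) (hpos : s p = true) :
    ∀ q : ZMod m, q ≠ p → ℓ q = ℓ (q + 1) ∧ s q = false := by
  intro q hq
  have hp : p ≠ p + 1 := fun h ↦
    hq ((subsingleton_of_zero_eq_one (by simpa using h : (1 : ZMod m) = 0).symm).elim q p)
  rcases hadm p (p + 1) hpure with hsmall | hlarge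
  · simpa [hpos] using (hsmall p (cyclicBetween_left_iff.2 hp)).2
  · exact hlarge q (cyclicBetween_add_one_left_iff.2 hq)
end
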